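/- If ν > 0 or d ≥ 3, then λ² ∫_{T^d} Γ̂(k) / (λ + Φ(k))² dk → 0 as λ → 0⁺, where Γ̂(k) = 1/ω(k)² = 1/(ν + 4α Σ_j sin²(π k_j)) and Φ(k) = 8 Σ_j sin²(π k_j) (for d ≥ 2) or Φ(k) = (4/3)sin²(πk)(1+2cos²(πk)) (for d = 1). -/

import Mathlib

/-!
Dominated convergence: for `λ > 0` the integrand `λ² Γ̂/(λ + Φ)²` is bounded by `Γ̂` and tends to
`0` wherever `Φ > 0`, that is, off the null set where some `k_j = 0`. So it suffices that `Γ̂` is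
integrable. If `ν > 0`, `Γ̂ ≤ 1/ν`. If `d ≥ 3`, AM-GM gives
`Σ_j sin²(π k_j) ≥ d ∏_j sin(π k_j)^(2/d)`, so `Γ̂` is dominated by a product of the
one-dimensional functions `sin(π x)^(-2/d)`, which are integrable on `(0, 1)` because `2/d < 1`.
-/

open Real MeasureTheory Filter
open scoped Topology

/-- Scattering rate: `Φ(k) = 8 Σ_j sin²(π k_j)` for `d ≥ 2`, and
`Φ(k) = (4/3) sin²(πk)(1 + 2cos²(πk))` for `d = 1`. -/
noncomputable def PhiRate (d : ℕ) (k : Fin d → ℝ) : ℝ :=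
  if h : d = 1 then
    (4 / 3) * Real.sin (π * k (Fin.cast h.symm 0)) ^ 2 *
      (1 + 2 * Real.cos (π * k (Fin.cast h.symm 0)) ^ 2)
  else 8 * ∑ m : Fin d, Real.sin (π * k m) ^ 2

/-- The unit cube `[0,1)^d`, representing the torus `T^d`. -/
def unitBox (d : ℕ) : Set (Fin d → ℝ) := Set.pi Set.univ fun _ => Set.Ico 0 1

open Set

noncomputable abbrev unitCubeVolume (d : ℕ) : Measure (Fin d → ℝ) :=
  Measure.pi fun _ => volume.restrict (Ioo 0 1)

noncomputable def omegaSq (d : ℕ) (α ν : ℝ) (k : Fin d → ℝ) : ℝ :=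
  ν + 4 * α * ∑ j : Fin d, sin (π * k j) ^ 2

theorem tendsto_sq_mul_integral_div_add_sq {X : Type*} [MeasurableSpace X] {μ : Measure X}
    {Γ Φ : X → ℝ} (hΓ : Integrable Γ μ) (hΦm : AEStronglyMeasurable Φ μ)
    (hΦ : ∀ᵐ x ∂μ, 0 < Φ x) :
    Tendsto (fun lam : ℝ => lam ^ 2 * ∫ x, Γ x / (lam + Φ x) ^ 2 ∂μ) (𝓝[>] 0) (𝓝 0) := by
  have hlim : Tendsto (fun lam : ℝ => ∫ x, lam ^ 2 * (Γ x / (lam + Φ x) ^ 2) ∂μ) (𝓝[>] 0)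
      (𝓝 (∫ _, (0 : ℝ) ∂μ)) := by
    refine tendsto_integral_filter_of_dominated_convergence (fun x => ‖Γ x‖) ?_ ?_ hΓ.norm ?_
    · exact Eventually.of_forall fun lam =>
        ((hΓ.aemeasurable.div ((aemeasurable_const.add hΦm.aemeasurable).pow_const 2)).const_mul
          _).aestronglyMeasurable
    · filter_upwards [self_mem_nhdsWithin] with lam (hlam : 0 < lam)
      filter_upwards [hΦ] with x hx
      have hq : ‖lam / (lam + Φ x)‖ ≤ 1 := by
        rw [norm_of_nonneg (by positivity)]
        exact div_le_one_of_le₀ (by linarith) (by positivity)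
      calc ‖lam ^ 2 * (Γ x / (lam + Φ x) ^ 2)‖ = ‖lam / (lam + Φ x)‖ ^ 2 * ‖Γ x‖ := by
            rw [← norm_pow, ← norm_mul, div_pow]; ring_nf
        _ ≤ ‖Γ x‖ := mul_le_of_le_one_left (norm_nonneg _) (pow_le_one₀ (norm_nonneg _) hq)
    · filter_upwards [hΦ] with x hx
      have hc : ContinuousAt (fun lam : ℝ => lam ^ 2 * (Γ x / (lam + Φ x) ^ 2)) 0 := by
        fun_prop (disch := simp [hx.ne'])
      simpa using hc.tendsto.mono_left nhdsWithin_le_nhds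
  simpa only [integral_const_mul, integral_zero] using hlim

theorem card_mul_prod_rpow_inv_card_le_sum {ι : Type*} [Fintype ι] {z : ι → ℝ}
    (hz : ∀ i, 0 ≤ z i) :
    Fintype.card ι * ∏ i, z i ^ (Fintype.card ι : ℝ)⁻¹ ≤ ∑ i, z i := by
  rcases isEmpty_or_nonempty ι with hι | hι
  · simp
  have hn : (0 : ℝ) < Fintype.card ι := by exact_mod_cast Fintype.card_pos
  have hamgm := geom_mean_le_arith_mean_weighted Finset.univ (fun _ => (Fintype.card ι : ℝ)⁻¹) z
    (fun _ _ => by positivity) (by simp [hn.ne']) (fun i _ => hz i)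
  rw [← Finset.mul_sum] at hamgm
  calc _ ≤ (Fintype.card ι : ℝ) * ((Fintype.card ι : ℝ)⁻¹ * ∑ i, z i) := by gcongr
    _ = ∑ i, z i := by field_simp

theorem sin_pi_mul_pos {x : ℝ} (hx0 : 0 < x) (hx1 : x < 1) : 0 < sin (π * x) :=
  sin_pos_of_pos_of_lt_pi (by positivity) (by nlinarith [pi_pos])

theorem two_mul_min_le_sin_pi_mul {x : ℝ} (hx0 : 0 ≤ x) (hx1 : x ≤ 1) :
    2 * min x (1 - x) ≤ sin (π * x) := by
  rcases le_total x (1 / 2) with hx | hx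
  · calc 2 * min x (1 - x) ≤ 2 * x := by gcongr; exact min_le_left _ _
      _ ≤ sin (π / 2 * (2 * x)) := le_sin_mul (by linarith) (by linarith)
      _ = sin (π * x) := by ring_nf
  · calc 2 * min x (1 - x) ≤ 2 * (1 - x) := by gcongr; exact min_le_right _ _
      _ ≤ sin (π / 2 * (2 * (1 - x))) := le_sin_mul (by linarith) (by linarith)
      _ = sin (π * x) := by rw [← sin_pi_sub]; ring_nf

theorem sin_pi_mul_rpow_neg_le {x r : ℝ} (hx0 : 0 < x) (hx1 : x < 1) (hr : 0 ≤ r) :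
    sin (π * x) ^ (-r) ≤ x ^ (-r) + (1 - x) ^ (-r) := by
  have hmin : 0 < min x (1 - x) := lt_min hx0 (by linarith)
  have hsin := two_mul_min_le_sin_pi_mul hx0.le hx1.le
  calc sin (π * x) ^ (-r) ≤ min x (1 - x) ^ (-r) :=
        rpow_le_rpow_of_nonpos hmin (by linarith) (neg_nonpos.2 hr)
    _ ≤ x ^ (-r) + (1 - x) ^ (-r) := by
        rcases min_choice x (1 - x) with h | h <;> rw [h]
        · exact le_add_of_nonneg_right (rpow_nonneg (by linarith) _)
        · exact le_add_of_nonneg_left (rpow_nonneg hx0.le _)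

theorem integrableOn_sin_pi_mul_rpow_neg {r : ℝ} (hr0 : 0 ≤ r) (hr1 : r < 1) :
    IntegrableOn (fun x => sin (π * x) ^ (-r)) (Ioo 0 1) := by
  have hx : IntervalIntegrable (fun x : ℝ => x ^ (-r)) volume 0 1 :=
    intervalIntegral.intervalIntegrable_rpow' (by linarith)
  have h1x : IntervalIntegrable (fun x : ℝ => (1 - x) ^ (-r)) volume 0 1 := by
    simpa using (hx.comp_sub_left 1).symm
  have hbound : IntegrableOn (fun x : ℝ => x ^ (-r) + (1 - x) ^ (-r)) (Ioo 0 1) :=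
    (intervalIntegrable_iff_integrableOn_Ioo_of_le zero_le_one).1 (hx.add h1x)
  have hmeas : Measurable fun x : ℝ => sin (π * x) ^ (-r) := by fun_prop
  refine hbound.mono' hmeas.aestronglyMeasurable ?_
  filter_upwards [ae_restrict_mem measurableSet_Ioo] with x hx
  rw [norm_of_nonneg (rpow_nonneg (sin_pi_mul_pos hx.1 hx.2).le _)]
  exact sin_pi_mul_rpow_neg_le hx.1 hx.2 hr0

theorem volume_restrict_unitBox (d : ℕ) :
    volume.restrict (unitBox d) = unitCubeVolume d := by
  rw [unitCubeVolume, ← Measure.restrict_pi_pi, ← volume_pi]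
  exact Measure.restrict_congr_set (Measure.ae_eq_set_pi fun _ _ => Ioo_ae_eq_Ico.symm)

theorem ae_forall_sin_pi_mul_pos (d : ℕ) :
    ∀ᵐ k ∂unitCubeVolume d, ∀ j, 0 < sin (π * k j) :=
  eventually_all.2 fun _ =>
    Measure.tendsto_eval_ae_ae.eventually (p := fun x : ℝ => 0 < sin (π * x)) <|
      (ae_restrict_mem measurableSet_Ioo).mono fun _ hx => sin_pi_mul_pos hx.1 hx.2

theorem continuous_phiRate (d : ℕ) : Continuous (PhiRate d) := by
  unfold PhiRate
  split <;> fun_prop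

theorem phiRate_pos {d : ℕ} {k : Fin d → ℝ} (hd : 0 < d) (hk : ∀ j, 0 < sin (π * k j)) :
    0 < PhiRate d k := by
  unfold PhiRate
  split_ifs with hd1
  · have := hk (Fin.cast hd1.symm 0)
    positivity
  · have := Finset.sum_pos (fun j _ => pow_pos (hk j) 2) (Finset.univ_nonempty_iff.2 ⟨⟨0, hd⟩⟩)
    positivity

theorem one_div_omegaSq_le_prod {d : ℕ} {α ν : ℝ} (hα : 0 < α) (hν : 0 ≤ ν) (hd : 0 < d)
    {k : Fin d → ℝ} (hk : ∀ j, 0 < sin (π * k j)) :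
    1 / omegaSq d α ν k ≤ (4 * α * d)⁻¹ * ∏ j, sin (π * k j) ^ (-(2 / d : ℝ)) := by
  set P := ∏ j, sin (π * k j) ^ (2 / d : ℝ)
  have hP : 0 < P := Finset.prod_pos fun j _ => rpow_pos_of_pos (hk j) _
  have hamgm : d * P ≤ ∑ j, sin (π * k j) ^ 2 := by
    have := card_mul_prod_rpow_inv_card_le_sum fun j => sq_nonneg (sin (π * k j))
    rw [Fintype.card_fin] at this
    convert this using 3 with j
    rw [← rpow_natCast, ← rpow_mul (hk j).le]
    push_cast
    ring_nf
  have hω : 4 * α * d * P ≤ omegaSq d α ν k := by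
    unfold omegaSq
    nlinarith
  calc 1 / omegaSq d α ν k ≤ 1 / (4 * α * d * P) := one_div_le_one_div_of_le (by positivity) hω
    _ = _ := by
      simp only [P, rpow_neg (hk _).le, Finset.prod_inv_distrib]
      field_simp

theorem measurable_one_div_omegaSq (d : ℕ) (α ν : ℝ) :
    Measurable fun k => 1 / omegaSq d α ν k := by
  unfold omegaSq
  fun_prop

theorem integrable_one_div_omegaSq_of_pos {d : ℕ} {α ν : ℝ} (hα : 0 ≤ α) (hν : 0 < ν) :
    Integrable (fun k => 1 / omegaSq d α ν k) (unitCubeVolume d) := by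
  refine (integrable_const (1 / ν)).mono' (measurable_one_div_omegaSq d α ν).aestronglyMeasurable
    (ae_of_all _ fun k => ?_)
  have hν_le : ν ≤ omegaSq d α ν k := by
    unfold omegaSq
    have := Finset.sum_nonneg fun j (_ : j ∈ Finset.univ) => sq_nonneg (sin (π * k j))
    nlinarith
  rw [norm_of_nonneg (one_div_nonneg.2 (hν.le.trans hν_le))]
  exact one_div_le_one_div_of_le hν hν_le

theorem integrable_one_div_omegaSq_of_three_le {d : ℕ} {α ν : ℝ} (hα : 0 < α) (hν : 0 ≤ ν)
    (hd : 3 ≤ d) :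
    Integrable (fun k => 1 / omegaSq d α ν k) (unitCubeVolume d) := by
  have hr : (2 / d : ℝ) < 1 := by
    rw [div_lt_one (by positivity)]
    exact_mod_cast (by omega : 2 < d)
  have hbound := (Integrable.fintype_prod fun _ : Fin d =>
    integrableOn_sin_pi_mul_rpow_neg (by positivity) hr).const_mul (4 * α * d)⁻¹
  refine hbound.mono' (measurable_one_div_omegaSq d α ν).aestronglyMeasurable ?_
  filter_upwards [ae_forall_sin_pi_mul_pos d] with k hk
  have hω : 0 ≤ omegaSq d α ν k := by
    unfold omegaSq
    positivity
  rw [norm_of_nonneg (one_div_nonneg.2 hω)]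
  exact one_div_omegaSq_le_prod hα hν (by omega) hk

/-- If `ν > 0` or `d ≥ 3`, then
`λ² ∫_{T^d} Γ̂(k)/(λ + Φ(k))² dk → 0` as `λ → 0⁺`, where
`Γ̂(k) = 1/(ν + 4α Σ_j sin²(π k_j))`. -/
theorem lambda_sq_resolvent_integral_vanishes (d : ℕ) (hd : 0 < d)
    (α ν : ℝ) (hα : 0 < α) (hν : 0 ≤ ν) (h : 0 < ν ∨ 3 ≤ d) :
    Tendsto
      (fun lam : ℝ => lam ^ 2 *
        ∫ k in unitBox d,
          (1 / (ν + 4 * α * ∑ j : Fin d, Real.sin (π * k j) ^ 2)) /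
            (lam + PhiRate d k) ^ 2)
      (𝓝[>] 0) (𝓝 0) := by
  rw [volume_restrict_unitBox]
  have hΓ : Integrable (fun k => 1 / omegaSq d α ν k) (unitCubeVolume d) := by
    rcases h with hν_pos | hd3
    · exact integrable_one_div_omegaSq_of_pos hα.le hν_pos
    · exact integrable_one_div_omegaSq_of_three_le hα hν hd3
  exact tendsto_sq_mul_integral_div_add_sq hΓ (continuous_phiRate d).aestronglyMeasurable
    ((ae_forall_sin_pi_mul_pos d).mono fun _ hk => phiRate_pos hd hk)
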